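/- arXiv:2009.12031 — 4 statements merged into one kernel-verified Lean document; each statement's English description precedes it below -/
import Mathlib

section
/- Let ℓ ∈ ℕ, let f : ℝ → ℝ be of class C^{ℓ+1}, and let ξ be a centered real random variable with finite moments up to order ℓ+2. Then there exists a constant C_ℓ (depending only on ℓ) such that |E[ξ f(ξ)] − Σ_{k=1}^{ℓ} (κ_{k+1}(ξ)/k!) E[f^{(k)}(ξ)]| ≤ C_ℓ · E[|ξ|^{ℓ+2}] · sup_{t ∈ ℝ} |f^{(ℓ+1)}(t)|, where κ_k(ξ) denotes the k-th cumulant of ξ. -/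
open MeasureTheory

/-- The cumulants determined recursively from the moment sequence `m` via
`κ_n = m_n - ∑_{k=1}^{n-1} C(n-1, k-1) κ_k m_{n-k}`. -/
noncomputable def cumulantOfMoments (m : ℕ → ℝ) : ℕ → ℝ
  | n =>
    m n - ∑ k ∈ (Finset.range (n - 1)).attach,
      (Nat.choose (n - 1) k.val : ℝ) * cumulantOfMoments m (k.val + 1) * m (n - 1 - k.val)
  decreasing_by
    have := k.2
    simp only [Finset.mem_range] at this
    omega

/-!
Expand `f, f', …, f⁽ℓ⁾` in Taylor polynomials at `0` with Lagrange remainder. For polynomials the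
cumulant expansion is an exact identity, a rearrangement of the moment–cumulant recursion
`m_{j+1} = ∑_k C(j,k) κ_{k+1} m_{j-k}` (the `k = 0` term vanishes since `κ₁ = E ξ = 0`). What is
left are the Taylor remainders, of size `sup |f⁽ℓ⁺¹⁾| E|ξ|^{ℓ+2}` for `E[ξ f(ξ)]` and
`|κ_{k+1}| sup |f⁽ℓ⁺¹⁾| E|ξ|^{ℓ-k+1}` for the `k`-th term. The recursion and Lyapunov's inequality
`E|ξ|^a E|ξ|^b ≤ E|ξ|^{a+b}` give `|κ_n| ≤ c_n E|ξ|^n`, and once more Lyapunov turns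
`E|ξ|^{k+1} E|ξ|^{ℓ-k+1}` into `E|ξ|^{ℓ+2}`.
-/

open Finset
open scoped Nat

theorem iteratedDeriv_iteratedDeriv {𝕜 F : Type*} [NontriviallyNormedField 𝕜]
    [NormedAddCommGroup F] [NormedSpace 𝕜 F] (i k : ℕ) (f : 𝕜 → F) :
    iteratedDeriv i (iteratedDeriv k f) = iteratedDeriv (i + k) f := by
  simp only [iteratedDeriv_eq_iterate, Function.iterate_add_apply]

theorem taylorWithinEval_uIcc_eq_sum {f : ℝ → ℝ} {n : ℕ} (hf : ContDiff ℝ n f) {x₀ x : ℝ}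
    (hx : x₀ ≠ x) :
    taylorWithinEval f n (Set.uIcc x₀ x) x₀ x =
      ∑ i ∈ range (n + 1), iteratedDeriv i f x₀ / i ! * (x - x₀) ^ i := by
  rw [taylor_within_apply]
  refine sum_congr rfl fun i hi => ?_
  rw [iteratedDerivWithin_eq_iteratedDeriv (uniqueDiffOn_uIcc hx)
    ((hf.of_le (by exact_mod_cast Nat.lt_succ_iff.1 (mem_range.1 hi))).contDiffAt)
    Set.left_mem_uIcc, smul_eq_mul]
  ring

theorem abs_sub_taylor_le {f : ℝ → ℝ} {n : ℕ} {M : ℝ} (hf : ContDiff ℝ (n + 1) f)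
    (hM : ∀ t, |iteratedDeriv (n + 1) f t| ≤ M) (x₀ x : ℝ) :
    |f x - ∑ i ∈ range (n + 1), iteratedDeriv i f x₀ / i ! * (x - x₀) ^ i| ≤
      M / (n + 1)! * |x - x₀| ^ (n + 1) := by
  rcases eq_or_ne x₀ x with rfl | hx
  · simp [sum_range_succ']
  obtain ⟨t, -, ht⟩ := taylor_mean_remainder_lagrange_iteratedDeriv hx hf.contDiffOn
  rw [← taylorWithinEval_uIcc_eq_sum (hf.of_le (by norm_cast; omega)) hx, ht, abs_div, abs_mul,
    abs_pow, Nat.abs_cast, div_mul_eq_mul_div]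
  gcongr
  exact hM t

theorem cumulantOfMoments_eq (m : ℕ → ℝ) (n : ℕ) :
    cumulantOfMoments m n = m n - ∑ k ∈ range (n - 1),
      ((n - 1).choose k : ℝ) * cumulantOfMoments m (k + 1) * m (n - 1 - k) := by
  rw [cumulantOfMoments, sum_attach (range (n - 1))
    fun k => ((n - 1).choose k : ℝ) * cumulantOfMoments m (k + 1) * m (n - 1 - k)]

theorem cumulantOfMoments_one (m : ℕ → ℝ) : cumulantOfMoments m 1 = m 1 := by
  rw [cumulantOfMoments_eq]
  simp

theorem moment_succ_eq_sum_cumulantOfMoments {m : ℕ → ℝ} (h0 : m 0 = 1) (j : ℕ) :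
    m (j + 1) = ∑ k ∈ range (j + 1),
      (j.choose k : ℝ) * cumulantOfMoments m (k + 1) * m (j - k) := by
  rw [sum_range_succ, Nat.choose_self, Nat.sub_self, h0, cumulantOfMoments_eq,
    Nat.add_sub_cancel]
  ring

/-- The cumulant expansion is exact for polynomials: for `f` of degree `< n` and `d j = f⁽ʲ⁾(0)`,
the two sides are `E[ξ f(ξ)]` and `∑ κ_{k+1} / k! E[f⁽ᵏ⁾(ξ)]`. -/
theorem sum_div_factorial_mul_moment_succ {m : ℕ → ℝ} (h0 : m 0 = 1) (d : ℕ → ℝ) (n : ℕ) :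
    ∑ j ∈ range n, d j / j ! * m (j + 1) =
      ∑ k ∈ range n, cumulantOfMoments m (k + 1) / k ! *
        ∑ i ∈ range (n - k), d (i + k) / i ! * m i := by
  simp only [mul_sum]
  rw [← sum_range_diag_flip n fun k i =>
    cumulantOfMoments m (k + 1) / k ! * (d (i + k) / i ! * m i)]
  refine sum_congr rfl fun j _ => ?_
  rw [moment_succ_eq_sum_cumulantOfMoments h0, mul_sum]
  refine sum_congr rfl fun k hk => ?_
  have hkj : k ≤ j := Nat.lt_succ_iff.1 (mem_range.1 hk)
  rw [Nat.sub_add_cancel hkj, Nat.cast_choose ℝ hkj]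
  field_simp

/-- The recursion of `cumulantOfMoments` with all moments equal to `1` and all signs `+`;
it bounds `|κ_n| / E|ξ|^n`. -/
def cumulantBound : ℕ → ℕ
  | n => 1 + ∑ k : Fin (n - 1), (n - 1).choose k * cumulantBound (k + 1)

theorem cumulantBound_eq (n : ℕ) :
    cumulantBound n = 1 + ∑ k ∈ range (n - 1), (n - 1).choose k * cumulantBound (k + 1) := by
  rw [cumulantBound, Fin.sum_univ_eq_sum_range (fun k => (n - 1).choose k * cumulantBound (k + 1))]

theorem abs_cumulantOfMoments_le {m a : ℕ → ℝ} {L : ℕ} (hm : ∀ j ≤ L, |m j| ≤ a j)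
    (ha : ∀ i j, i + j ≤ L → a i * a j ≤ a (i + j)) {n : ℕ} (hn : n ≤ L) :
    |cumulantOfMoments m n| ≤ cumulantBound n * a n := by
  induction n using Nat.strong_induction_on with
  | _ n ih =>
    have ha0 : ∀ j ≤ L, 0 ≤ a j := fun j hj => (abs_nonneg _).trans (hm j hj)
    have hterm : ∀ k ∈ range (n - 1),
        |((n - 1).choose k : ℝ) * cumulantOfMoments m (k + 1) * m (n - 1 - k)| ≤
          ((n - 1).choose k : ℝ) * cumulantBound (k + 1) * a n := by
      intro k hk
      have hk : k + 1 < n := by have := mem_range.1 hk; omega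
      have hsplit : a (k + 1) * a (n - 1 - k) ≤ a n := by
        simpa [show k + 1 + (n - 1 - k) = n by omega] using ha (k + 1) (n - 1 - k) (by omega)
      rw [abs_mul, abs_mul, Nat.abs_cast, mul_assoc, mul_assoc]
      refine mul_le_mul_of_nonneg_left ?_ (Nat.cast_nonneg _)
      calc |cumulantOfMoments m (k + 1)| * |m (n - 1 - k)|
          ≤ (cumulantBound (k + 1) * a (k + 1)) * a (n - 1 - k) :=
            mul_le_mul (ih _ hk (by omega)) (hm _ (by omega)) (abs_nonneg _)
              (by have := ha0 (k + 1) (by omega); positivity)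
        _ ≤ cumulantBound (k + 1) * a n := by
            rw [mul_assoc]; gcongr
    calc |cumulantOfMoments m n|
        ≤ |m n| + ∑ k ∈ range (n - 1),
            |((n - 1).choose k : ℝ) * cumulantOfMoments m (k + 1) * m (n - 1 - k)| := by
          rw [cumulantOfMoments_eq]
          exact (abs_sub _ _).trans (add_le_add_right (abs_sum_le_sum_abs _ _) _)
      _ ≤ a n + ∑ k ∈ range (n - 1), ((n - 1).choose k : ℝ) * cumulantBound (k + 1) * a n :=
          add_le_add (hm n hn) (sum_le_sum hterm)
      _ = cumulantBound n * a n := by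
          rw [cumulantBound_eq, ← sum_mul]
          push_cast
          ring

section Moments

variable {Ω : Type*} [MeasurableSpace Ω] {μ : Measure Ω} {ξ : Ω → ℝ}

theorem integrable_pow_of_integrable_abs_pow (hξ : AEStronglyMeasurable ξ μ) {k : ℕ}
    (h : Integrable (fun ω => |ξ ω| ^ k) μ) : Integrable (fun ω => ξ ω ^ k) μ :=
  (integrable_norm_iff (hξ.pow k)).1 (h.congr (ae_of_all _ fun _ => (abs_pow _ _).symm))

theorem integral_abs_pow_eq_lpNorm_pow (hξ : AEStronglyMeasurable ξ μ) {q : ℕ} (hq : q ≠ 0) :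
    ∫ ω, |ξ ω| ^ q ∂μ = lpNorm ξ q μ ^ q := by
  rw [lpNorm_eq_integral_norm_rpow_toReal (by simpa using hq) (by simp) hξ]
  simp only [ENNReal.toReal_natCast, Real.rpow_natCast, Real.norm_eq_abs]
  exact (Real.rpow_inv_natCast_pow (integral_nonneg fun ω => by positivity) hq).symm

theorem integral_abs_pow_mul_integral_abs_pow_le [IsProbabilityMeasure μ]
    (hξ : AEStronglyMeasurable ξ μ) {a b : ℕ} (hab : Integrable (fun ω => |ξ ω| ^ (a + b)) μ) :
    (∫ ω, |ξ ω| ^ a ∂μ) * ∫ ω, |ξ ω| ^ b ∂μ ≤ ∫ ω, |ξ ω| ^ (a + b) ∂μ := by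
  rcases eq_or_ne a 0 with rfl | ha
  · simp
  rcases eq_or_ne b 0 with rfl | hb
  · simp
  have hmem : MemLp ξ (a + b : ℕ) μ := by
    rw [← integrable_norm_rpow_iff hξ (by simp; omega) (by simp)]
    simpa only [ENNReal.toReal_natCast, Real.rpow_natCast, Real.norm_eq_abs] using hab
  have hmono : ∀ p ≤ a + b, lpNorm ξ p μ ^ p ≤ lpNorm ξ (a + b : ℕ) μ ^ p := fun p hp => by
    refine pow_le_pow_left₀ lpNorm_nonneg ?_ p
    rw [← toReal_eLpNorm hξ, ← toReal_eLpNorm hξ]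
    exact ENNReal.toReal_mono hmem.eLpNorm_ne_top
      (eLpNorm_le_eLpNorm_of_exponent_le (by exact_mod_cast hp) hξ)
  rw [integral_abs_pow_eq_lpNorm_pow hξ ha, integral_abs_pow_eq_lpNorm_pow hξ hb,
    integral_abs_pow_eq_lpNorm_pow hξ (by omega), pow_add]
  exact mul_le_mul (hmono a (by omega)) (hmono b (by omega)) (pow_nonneg lpNorm_nonneg b)
    (pow_nonneg lpNorm_nonneg a)

theorem abs_integral_sub_sum_le {ι : Type*} {s : Finset ι} {F : ℝ → ℝ} {c : ι → ℝ} {p : ι → ℕ}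
    {q : ℕ} {K : ℝ} (hξ : AEStronglyMeasurable ξ μ) (hF : Continuous F)
    (hp : ∀ i ∈ s, Integrable (fun ω => ξ ω ^ p i) μ) (hq : Integrable (fun ω => |ξ ω| ^ q) μ)
    (hFc : ∀ x, |F x - ∑ i ∈ s, c i * x ^ p i| ≤ K * |x| ^ q) :
    |∫ ω, F (ξ ω) ∂μ - ∑ i ∈ s, c i * ∫ ω, ξ ω ^ p i ∂μ| ≤ K * ∫ ω, |ξ ω| ^ q ∂μ := by
  have hP : Integrable (fun ω => ∑ i ∈ s, c i * ξ ω ^ p i) μ :=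
    integrable_finsetSum _ fun i hi => (hp i hi).const_mul (c i)
  have hR : Integrable (fun ω => F (ξ ω) - ∑ i ∈ s, c i * ξ ω ^ p i) μ :=
    (hq.const_mul K).mono' ((hF.comp_aestronglyMeasurable hξ).sub hP.aestronglyMeasurable)
      (ae_of_all _ fun ω => hFc (ξ ω))
  have hFξ : Integrable (fun ω => F (ξ ω)) μ :=
    (hR.add hP).congr (ae_of_all _ fun ω => sub_add_cancel _ _)
  calc |∫ ω, F (ξ ω) ∂μ - ∑ i ∈ s, c i * ∫ ω, ξ ω ^ p i ∂μ|
      = |∫ ω, F (ξ ω) - ∑ i ∈ s, c i * ξ ω ^ p i ∂μ| := by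
        rw [integral_sub hFξ hP, integral_finsetSum _ fun i hi => (hp i hi).const_mul (c i)]
        simp only [integral_const_mul]
    _ ≤ ∫ ω, |F (ξ ω) - ∑ i ∈ s, c i * ξ ω ^ p i| ∂μ := abs_integral_le_integral_abs
    _ ≤ ∫ ω, K * |ξ ω| ^ q ∂μ := integral_mono hR.abs (hq.const_mul K) fun ω => hFc (ξ ω)
    _ = K * ∫ ω, |ξ ω| ^ q ∂μ := integral_const_mul K _

end Moments

theorem abs_sub_sum_mul_le {ι : Type*} {s : Finset ι} {A S e₀ : ℝ} {w G P e : ι → ℝ}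
    (hS : S = ∑ i ∈ s, w i * P i) (hA : |A - S| ≤ e₀) (hG : ∀ i ∈ s, |w i| * |G i - P i| ≤ e i) :
    |A - ∑ i ∈ s, w i * G i| ≤ e₀ + ∑ i ∈ s, e i := by
  have hsplit : A - ∑ i ∈ s, w i * G i = (A - S) - ∑ i ∈ s, w i * (G i - P i) := by
    simp only [hS, mul_sub, sum_sub_distrib]
    ring
  rw [hsplit]
  refine (abs_sub _ _).trans (add_le_add hA ((abs_sum_le_sum_abs _ _).trans (sum_le_sum ?_)))
  exact fun i hi => (abs_mul _ _).trans_le (hG i hi)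

section Expansion

variable {Ω : Type*} [MeasurableSpace Ω] {μ : Measure Ω} {ξ : Ω → ℝ}

theorem abs_integral_comp_sub_taylor_le {f : ℝ → ℝ} {n : ℕ} {M : ℝ}
    (hξ : AEStronglyMeasurable ξ μ) (hint : ∀ k ≤ n + 1, Integrable (fun ω => |ξ ω| ^ k) μ)
    (hf : ContDiff ℝ (n + 1) f) (hM : ∀ t, |iteratedDeriv (n + 1) f t| ≤ M) :
    |∫ ω, f (ξ ω) ∂μ - ∑ i ∈ range (n + 1), iteratedDeriv i f 0 / i ! * ∫ ω, ξ ω ^ i ∂μ| ≤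
      M / (n + 1)! * ∫ ω, |ξ ω| ^ (n + 1) ∂μ :=
  abs_integral_sub_sum_le hξ hf.continuous
    (fun i hi => integrable_pow_of_integrable_abs_pow hξ (hint i (mem_range.1 hi).le))
    (hint _ le_rfl) fun x => by simpa using abs_sub_taylor_le hf hM 0 x

theorem abs_integral_mul_comp_sub_taylor_le {f : ℝ → ℝ} {n : ℕ} {M : ℝ}
    (hξ : AEStronglyMeasurable ξ μ) (hint : ∀ k ≤ n + 2, Integrable (fun ω => |ξ ω| ^ k) μ)
    (hf : ContDiff ℝ (n + 1) f) (hM : ∀ t, |iteratedDeriv (n + 1) f t| ≤ M) :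
    |∫ ω, ξ ω * f (ξ ω) ∂μ -
        ∑ i ∈ range (n + 1), iteratedDeriv i f 0 / i ! * ∫ ω, ξ ω ^ (i + 1) ∂μ| ≤
      M / (n + 1)! * ∫ ω, |ξ ω| ^ (n + 2) ∂μ := by
  refine abs_integral_sub_sum_le (F := fun x => x * f x) (p := (· + 1)) hξ
    (continuous_id.mul hf.continuous)
    (fun i hi => integrable_pow_of_integrable_abs_pow hξ
      (hint _ (by have := mem_range.1 hi; omega)))
    (hint _ le_rfl) fun x => ?_
  have hT := abs_sub_taylor_le hf hM 0 x
  simp only [sub_zero] at hT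
  calc |x * f x - ∑ i ∈ range (n + 1), iteratedDeriv i f 0 / i ! * x ^ (i + 1)|
      = |x| * |f x - ∑ i ∈ range (n + 1), iteratedDeriv i f 0 / i ! * x ^ i| := by
        rw [← abs_mul, mul_sub, mul_sum]
        simp only [pow_succ]
        ring_nf
    _ ≤ |x| * (M / (n + 1)! * |x| ^ (n + 1)) := by gcongr
    _ = M / (n + 1)! * |x| ^ (n + 2) := by ring

theorem abs_cumulant_mul_integral_abs_pow_le [IsProbabilityMeasure μ]
    (hξ : AEStronglyMeasurable ξ μ) {L : ℕ}
    (hint : ∀ k ≤ L, Integrable (fun ω => |ξ ω| ^ k) μ) {n s : ℕ} (hns : n + s ≤ L) :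
    |cumulantOfMoments (fun j => ∫ ω, ξ ω ^ j ∂μ) n| * ∫ ω, |ξ ω| ^ s ∂μ ≤
      cumulantBound n * ∫ ω, |ξ ω| ^ (n + s) ∂μ := by
  have hκ := abs_cumulantOfMoments_le (L := L) (a := fun j => ∫ ω, |ξ ω| ^ j ∂μ)
    (fun j _ => abs_integral_le_integral_abs.trans_eq
      (integral_congr_ae (ae_of_all _ fun ω => abs_pow (ξ ω) j)))
    (fun i j hij => integral_abs_pow_mul_integral_abs_pow_le hξ (hint _ hij)) (n := n) (by omega)
  calc _ ≤ cumulantBound n * (∫ ω, |ξ ω| ^ n ∂μ) * ∫ ω, |ξ ω| ^ s ∂μ :=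
        mul_le_mul_of_nonneg_right hκ (integral_nonneg fun ω => by positivity)
    _ ≤ cumulantBound n * ∫ ω, |ξ ω| ^ (n + s) ∂μ := by
        rw [mul_assoc]
        gcongr
        exact integral_abs_pow_mul_integral_abs_pow_le hξ (hint _ hns)

theorem abs_cumulant_div_mul_taylor_remainder_le [IsProbabilityMeasure μ]
    (hξ : AEStronglyMeasurable ξ μ) {ℓ k : ℕ} (hk : k ≤ ℓ)
    (hint : ∀ j ≤ ℓ + 2, Integrable (fun ω => |ξ ω| ^ j) μ) {f : ℝ → ℝ}
    (hf : ContDiff ℝ (ℓ + 1) f) {M : ℝ} (hM : ∀ t, |iteratedDeriv (ℓ + 1) f t| ≤ M) :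
    |cumulantOfMoments (fun n => ∫ ω, ξ ω ^ n ∂μ) (k + 1) / k !| *
        |∫ ω, iteratedDeriv k f (ξ ω) ∂μ -
          ∑ i ∈ range (ℓ - k + 1), iteratedDeriv (i + k) f 0 / i ! * ∫ ω, ξ ω ^ i ∂μ| ≤
      cumulantBound (k + 1) / (k ! * (ℓ - k + 1)!) * (∫ ω, |ξ ω| ^ (ℓ + 2) ∂μ) * M := by
  set κ := cumulantOfMoments (fun n => ∫ ω, ξ ω ^ n ∂μ) (k + 1)
  have hfk : ContDiff ℝ (ℓ - k + 1 : ℕ) (iteratedDeriv k f) := by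
    rw [iteratedDeriv_eq_iterate]
    exact ContDiff.iterate_deriv' _ k (by rwa [show ℓ - k + 1 + k = ℓ + 1 by omega])
  have hT := abs_integral_comp_sub_taylor_le (n := ℓ - k) hξ (fun j hj => hint j (by omega))
    (by exact_mod_cast hfk) (M := M) (by
      simpa only [iteratedDeriv_iteratedDeriv, show ℓ - k + 1 + k = ℓ + 1 by omega] using hM)
  simp only [iteratedDeriv_iteratedDeriv] at hT
  have hκ := abs_cumulant_mul_integral_abs_pow_le hξ hint (n := k + 1) (s := ℓ - k + 1)
    (by omega)
  rw [show k + 1 + (ℓ - k + 1) = ℓ + 2 by omega] at hκ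
  have hM0 : 0 ≤ M := (abs_nonneg _).trans (hM 0)
  calc |κ / k !| * |_ - _|
      ≤ |κ| / k ! * (M / (ℓ - k + 1)! * ∫ ω, |ξ ω| ^ (ℓ - k + 1) ∂μ) := by
        rw [abs_div, Nat.abs_cast]
        gcongr
    _ = |κ| * (∫ ω, |ξ ω| ^ (ℓ - k + 1) ∂μ) * M / (k ! * (ℓ - k + 1)!) := by ring
    _ ≤ cumulantBound (k + 1) * (∫ ω, |ξ ω| ^ (ℓ + 2) ∂μ) * M / (k ! * (ℓ - k + 1)!) := by
        gcongr
    _ = _ := by ring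

noncomputable def cumulantExpansionConstant (ℓ : ℕ) : ℝ :=
  1 / (ℓ + 1)! + ∑ k ∈ Icc 1 ℓ, (cumulantBound (k + 1) : ℝ) / (k ! * (ℓ - k + 1)!)

theorem abs_integral_mul_sub_cumulant_expansion_le [IsProbabilityMeasure μ]
    (hξ : AEStronglyMeasurable ξ μ) {ℓ : ℕ}
    (hint : ∀ k ≤ ℓ + 2, Integrable (fun ω => |ξ ω| ^ k) μ) (hmean : ∫ ω, ξ ω ∂μ = 0)
    {f : ℝ → ℝ} (hf : ContDiff ℝ (ℓ + 1) f) {M : ℝ}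
    (hM : ∀ t, |iteratedDeriv (ℓ + 1) f t| ≤ M) :
    |∫ ω, ξ ω * f (ξ ω) ∂μ - ∑ k ∈ Icc 1 ℓ,
        cumulantOfMoments (fun n => ∫ ω, ξ ω ^ n ∂μ) (k + 1) / k ! *
          ∫ ω, iteratedDeriv k f (ξ ω) ∂μ| ≤
      cumulantExpansionConstant ℓ * (∫ ω, |ξ ω| ^ (ℓ + 2) ∂μ) * M := by
  set m : ℕ → ℝ := fun n => ∫ ω, ξ ω ^ n ∂μ
  have hpoly : ∑ j ∈ range (ℓ + 1), iteratedDeriv j f 0 / j ! * m (j + 1) =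
      ∑ k ∈ Icc 1 ℓ, cumulantOfMoments m (k + 1) / k ! *
        ∑ i ∈ range (ℓ - k + 1), iteratedDeriv (i + k) f 0 / i ! * m i := by
    rw [sum_div_factorial_mul_moment_succ (by simp [m]), ← sum_subset (s₁ := Icc 1 ℓ)]
    · exact sum_congr rfl fun k hk => by rw [Nat.sub_add_comm (mem_Icc.1 hk).2]
    · intro k; simp only [mem_Icc, mem_range]; omega
    · intro k hk hk'
      obtain rfl : k = 0 := by simp only [mem_Icc, mem_range] at hk hk'; omega
      simp [cumulantOfMoments_one, m, hmean]
  refine (abs_sub_sum_mul_le hpoly (abs_integral_mul_comp_sub_taylor_le hξ hint hf hM)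
    (e := fun k => cumulantBound (k + 1) / (k ! * (ℓ - k + 1)!) * (∫ ω, |ξ ω| ^ (ℓ + 2) ∂μ) * M)
    fun k hk => abs_cumulant_div_mul_taylor_remainder_le hξ (mem_Icc.1 hk).2 hint hf hM)
    |>.trans_eq ?_
  rw [cumulantExpansionConstant, add_mul, add_mul, sum_mul, sum_mul]
  ring

end Expansion

/-- Cumulant expansion lemma. -/
theorem stmt4 (ℓ : ℕ) :
    ∃ C : ℝ, ∀ (Ω : Type) [MeasurableSpace Ω] (μ : Measure Ω),
      IsProbabilityMeasure μ →
      ∀ ξ : Ω → ℝ, Measurable ξ →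
      (∀ k ≤ ℓ + 2, Integrable (fun ω => |ξ ω| ^ k) μ) →
      (∫ ω, ξ ω ∂μ) = 0 →
      ∀ f : ℝ → ℝ, ContDiff ℝ (↑(ℓ + 1) : ℕ∞) f →
      BddAbove (Set.range fun t => |iteratedDeriv (ℓ + 1) f t|) →
      |(∫ ω, ξ ω * f (ξ ω) ∂μ) -
          ∑ k ∈ Finset.Icc 1 ℓ,
            cumulantOfMoments (fun n => ∫ ω, ξ ω ^ n ∂μ) (k + 1) / (Nat.factorial k) *
              ∫ ω, iteratedDeriv k f (ξ ω) ∂μ| ≤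
        C * (∫ ω, |ξ ω| ^ (ℓ + 2) ∂μ) * ⨆ t : ℝ, |iteratedDeriv (ℓ + 1) f t| := by
  refine ⟨cumulantExpansionConstant ℓ, fun Ω _ μ _ ξ hξ hint hmean f hf hbdd => ?_⟩
  exact abs_integral_mul_sub_cumulant_expansion_le hξ.aestronglyMeasurable hint hmean
    (by exact_mod_cast hf) fun t => le_ciSup hbdd t
end

section
/- Let b₁,…,b_N be deterministic complex numbers and X₁,…,X_N independent random variables with E X_i = 0, E|X_i|² = 1, and E|X_i|^p ≤ C_p for all p. Then for any ε > 0 and D > 0 there is N₀ such that for N ≥ N₀, P(|Σ_i b_i X_i| > N^ε (Σ_i |b_i|²)^{1/2}) ≤ N^{-D}. -/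
/-!
Moment method. Write `S = ∑ aᵢ Xᵢ` with `∑ aᵢ² ≤ 1` (real and imaginary parts of `b / ‖b‖₂`
separately). Expanding `(aⱼ Xⱼ + S)ⁿ` binomially, independence factors every term, the linear
term vanishes because `𝔼 Xⱼ = 0`, and every other term carries `|aⱼ|ᵐ ≤ aⱼ²` with `m ≥ 2`.
Adding the summand `aⱼ Xⱼ` therefore changes `𝔼 Sⁿ` by at most `aⱼ²` times a constant built from
`C` and the bounds on lower moments, so by induction `|𝔼 Sⁿ| ≤ momentBound C n`, uniformly in
`N`. Markov's inequality for the moment of even order `n` with `εn ≥ D + 1` gives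
`P(|S| ≥ N^ε / 2) ≤ 2ⁿ momentBound C n · N^(-εn) ≤ N^(-D) / 2` for large `N`.
-/

open MeasureTheory ProbabilityTheory Finset

noncomputable def momentBound (C : ℕ → ℝ) : ℕ → ℝ
  | 0 => 1
  | n + 1 => (1 + ∑ m ∈ Ico 2 (n + 2), (n + 1).choose m * |C m|) * momentBound C n

lemma one_le_momentBound (C : ℕ → ℝ) (n : ℕ) : 1 ≤ momentBound C n := by
  induction n with
  | zero => rfl
  | succ n ih =>
    have : 0 ≤ ∑ m ∈ Ico 2 (n + 2), ((n + 1).choose m : ℝ) * |C m| := by positivity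
    exact one_le_mul_of_one_le_of_one_le (by linarith) ih

lemma monotone_momentBound (C : ℕ → ℝ) : Monotone (momentBound C) :=
  monotone_nat_of_le_succ fun n => by
    have : 0 ≤ ∑ m ∈ Ico 2 (n + 2), ((n + 1).choose m : ℝ) * |C m| := by positivity
    exact le_mul_of_one_le_left (zero_le_one.trans (one_le_momentBound C n)) (by linarith)

section Moments

variable {Ω : Type*} [MeasurableSpace Ω] {μ : Measure Ω}

lemma MeasureTheory.MemLp.integrable_pow [IsFiniteMeasure μ] {f : Ω → ℝ} {p : ℕ}
    (hf : MemLp f p μ) : Integrable (fun ω => f ω ^ p) μ :=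
  hf.integrable_norm_pow'.mono (hf.1.pow p) (ae_of_all _ fun ω => by simp [norm_pow])

lemma MeasureTheory.memLp_of_integrable_abs_pow {f : Ω → ℝ} (hf : AEStronglyMeasurable f μ)
    {p : ℕ} (h : Integrable (fun ω => |f ω| ^ p) μ) : MemLp f p μ := by
  rcases eq_or_ne p 0 with rfl | hp
  · simpa using hf
  · rw [← integrable_norm_rpow_iff hf (by simpa) (by simp)]
    simpa [Real.rpow_natCast] using h

lemma abs_integral_const_mul_pow_le {X : Ω → ℝ} {a c : ℝ} (ha : |a| ≤ 1) {m : ℕ} (hm : 2 ≤ m)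
    (hc : |∫ ω, X ω ^ m ∂μ| ≤ c) : |∫ ω, (a * X ω) ^ m ∂μ| ≤ a ^ 2 * |c| := by
  simp_rw [mul_pow, integral_const_mul, abs_mul, abs_pow]
  rw [← sq_abs a]
  exact mul_le_mul (pow_le_pow_of_le_one (abs_nonneg a) ha hm) (hc.trans (le_abs_self c))
    (abs_nonneg _) (sq_nonneg _)

lemma ProbabilityTheory.IndepFun.integral_add_pow [IsFiniteMeasure μ] {Y Z : Ω → ℝ}
    (hYZ : IndepFun Y Z μ) (hY : ∀ p : ℕ, MemLp Y p μ) (hZ : ∀ p : ℕ, MemLp Z p μ) (n : ℕ) :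
    ∫ ω, (Y ω + Z ω) ^ n ∂μ =
      ∑ m ∈ range (n + 1), (∫ ω, Y ω ^ m ∂μ) * (∫ ω, Z ω ^ (n - m) ∂μ) * n.choose m := by
  have hpow (m : ℕ) : IndepFun (fun ω => Y ω ^ m) (fun ω => Z ω ^ (n - m)) μ :=
    hYZ.comp (measurable_id.pow_const m) (measurable_id.pow_const (n - m))
  simp_rw [add_pow]
  rw [integral_finsetSum _ fun m _ => by
    simpa only [Pi.mul_apply] using ((hpow m).integrable_mul (hY m).integrable_pow
      (hZ (n - m)).integrable_pow).mul_const (n.choose m : ℝ)]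
  refine sum_congr rfl fun m _ => ?_
  rw [integral_mul_const, (hpow m).integral_fun_mul_eq_mul_integral
    (hY m).integrable_pow.1 (hZ (n - m)).integrable_pow.1]

lemma ProbabilityTheory.IndepFun.abs_integral_add_pow_sub_le [IsProbabilityMeasure μ]
    {Y Z : Ω → ℝ} (hYZ : IndepFun Y Z μ) (hY : ∀ p : ℕ, MemLp Y p μ) (hZ : ∀ p : ℕ, MemLp Z p μ)
    (hmean : ∫ ω, Y ω ∂μ = 0) {n : ℕ} {v B : ℝ} {c : ℕ → ℝ}
    (hYm : ∀ m, 2 ≤ m → |∫ ω, Y ω ^ m ∂μ| ≤ v * c m)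
    (hZr : ∀ r < n, |∫ ω, Z ω ^ r ∂μ| ≤ B) :
    |∫ ω, (Y ω + Z ω) ^ n ∂μ - ∫ ω, Z ω ^ n ∂μ| ≤
      v * B * ∑ m ∈ Ico 2 (n + 1), n.choose m * c m := by
  rcases n with _ | n
  · simp
  rw [hYZ.integral_add_pow hY hZ, range_eq_Ico, sum_eq_sum_Ico_succ_bot (by omega),
    sum_eq_sum_Ico_succ_bot (by omega)]
  simp only [pow_zero, integral_const, probReal_univ, pow_one, hmean, Nat.choose_zero_right,
    Nat.choose_one_right, Nat.sub_zero, smul_eq_mul, mul_one, one_mul, zero_mul, zero_add,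
    Nat.cast_one, Nat.reduceAdd, add_sub_cancel_left, mul_sum]
  refine (abs_sum_le_sum_abs _ _).trans (sum_le_sum fun m hm => ?_)
  have hm2 : 2 ≤ m := (mem_Ico.1 hm).1
  rw [abs_mul, abs_mul, Nat.abs_cast]
  have hvc : 0 ≤ v * c m := (abs_nonneg _).trans (hYm m hm2)
  calc |∫ ω, Y ω ^ m ∂μ| * |∫ ω, Z ω ^ (n + 1 - m) ∂μ| * (n + 1).choose m
      ≤ v * c m * B * (n + 1).choose m := by
        gcongr
        exacts [hYm m hm2, hZr _ (by omega)]
    _ = v * B * ((n + 1).choose m * c m) := by ring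

lemma measure_abs_ge_le_of_integral_pow_le [IsFiniteMeasure μ] {Y : Ω → ℝ} {n : ℕ}
    (hn : Even n) (hY : Integrable (fun ω => Y ω ^ n) μ) {B t : ℝ} (hB : ∫ ω, Y ω ^ n ∂μ ≤ B)
    (ht : 0 < t) :
    μ {ω | t ≤ |Y ω|} ≤ ENNReal.ofReal (B / t ^ n) := by
  have hsub : {ω | t ≤ |Y ω|} ⊆ {ω | t ^ n ≤ Y ω ^ n} := fun ω (hω : t ≤ |Y ω|) =>
    show t ^ n ≤ Y ω ^ n from hn.pow_abs (Y ω) ▸ pow_le_pow_left₀ ht.le hω n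
  have hmarkov := mul_meas_ge_le_integral_of_nonneg (ae_of_all _ fun ω => hn.pow_nonneg (Y ω))
    hY (t ^ n)
  rw [← ofReal_measureReal]
  refine ENNReal.ofReal_le_ofReal ((measureReal_mono hsub).trans ?_)
  rw [le_div_iff₀' (pow_pos ht n)]
  exact hmarkov.trans hB

variable [IsProbabilityMeasure μ]

lemma abs_integral_sum_pow_succ_le {ι : Type*} {X : ι → Ω → ℝ} (hind : iIndepFun X μ)
    (hLp : ∀ i (p : ℕ), MemLp (X i) p μ) (hmean : ∀ i, ∫ ω, X i ω ∂μ = 0) {C : ℕ → ℝ}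
    (hC : ∀ i m, |∫ ω, X i ω ^ m ∂μ| ≤ C m) (a : ι → ℝ) {n : ℕ} {B : ℝ}
    (hB : ∀ r ≤ n, ∀ s : Finset ι, ∑ i ∈ s, a i ^ 2 ≤ 1 →
      |∫ ω, (∑ i ∈ s, a i * X i ω) ^ r ∂μ| ≤ B)
    (s : Finset ι) (hs : ∑ i ∈ s, a i ^ 2 ≤ 1) :
    |∫ ω, (∑ i ∈ s, a i * X i ω) ^ (n + 1) ∂μ| ≤
      (∑ i ∈ s, a i ^ 2) * (B * ∑ m ∈ Ico 2 (n + 2), (n + 1).choose m * |C m|) := by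
  classical
  have hindep : iIndepFun (fun i ω => a i * X i ω) μ :=
    hind.comp (fun i x => a i * x) fun i => measurable_const_mul (a i)
  induction s using Finset.induction_on with
  | empty => simp
  | insert j s hj ih =>
    simp only [sum_insert hj] at hs ⊢
    have hs0 : 0 ≤ ∑ i ∈ s, a i ^ 2 := by positivity
    have hsj : ∑ i ∈ s, a i ^ 2 ≤ 1 := by nlinarith [sq_nonneg (a j)]
    have haj : |a j| ≤ 1 := abs_le_one_iff_mul_self_le_one.2 (by nlinarith)
    have hstep := IndepFun.abs_integral_add_pow_sub_le (n := n + 1) (c := fun m => |C m|)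
      (by simpa only [sum_fn] using (hindep.indepFun_finsetSum_of_notMem₀
        (fun i => ((hLp i 1).const_mul (a i)).1.aemeasurable) hj).symm)
      (fun p => (hLp j p).const_mul (a j))
      (fun p => memLp_finsetSum s fun i _ => (hLp i p).const_mul (a i))
      (by rw [integral_const_mul, hmean, mul_zero])
      (fun m hm => abs_integral_const_mul_pow_le haj hm (hC j m))
      (fun r hr => hB r (by omega) s hsj)
    calc _ ≤ |∫ ω, (a j * X j ω + ∑ i ∈ s, a i * X i ω) ^ (n + 1) ∂μ
            - ∫ ω, (∑ i ∈ s, a i * X i ω) ^ (n + 1) ∂μ|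
          + |∫ ω, (∑ i ∈ s, a i * X i ω) ^ (n + 1) ∂μ| :=
          sub_le_iff_le_add.1 (abs_sub_abs_le_abs_sub _ _)
      _ ≤ _ := by linear_combination hstep + ih hsj

theorem abs_integral_sum_pow_le {ι : Type*} {X : ι → Ω → ℝ} (hind : iIndepFun X μ)
    (hLp : ∀ i (p : ℕ), MemLp (X i) p μ) (hmean : ∀ i, ∫ ω, X i ω ∂μ = 0) {C : ℕ → ℝ}
    (hC : ∀ i m, |∫ ω, X i ω ^ m ∂μ| ≤ C m) (a : ι → ℝ) (n : ℕ) {s : Finset ι}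
    (hs : ∑ i ∈ s, a i ^ 2 ≤ 1) :
    |∫ ω, (∑ i ∈ s, a i * X i ω) ^ n ∂μ| ≤ momentBound C n := by
  induction n using Nat.strong_induction_on generalizing s with
  | _ n ih =>
  rcases n with _ | n
  · simp [momentBound]
  have hL : 0 ≤ ∑ m ∈ Ico 2 (n + 2), ((n + 1).choose m : ℝ) * |C m| := by positivity
  have hM := one_le_momentBound C n
  calc _ ≤ (∑ i ∈ s, a i ^ 2) * (momentBound C n * _) :=
        abs_integral_sum_pow_succ_le hind hLp hmean hC a
          (fun r hr s hs => (ih r (by omega) hs).trans (monotone_momentBound C hr)) s hs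
    _ ≤ 1 * (momentBound C n * _) := by gcongr
    _ ≤ momentBound C (n + 1) := by simp only [momentBound]; nlinarith

lemma measure_abs_sum_ge_mul_le {ι : Type*} {X : ι → Ω → ℝ} (hind : iIndepFun X μ)
    (hLp : ∀ i (p : ℕ), MemLp (X i) p μ) (hmean : ∀ i, ∫ ω, X i ω ∂μ = 0) {C : ℕ → ℝ}
    (hC : ∀ i m, |∫ ω, X i ω ^ m ∂μ| ≤ C m) {s : Finset ι} {a : ι → ℝ} {Ψ : ℝ} (hΨ : 0 < Ψ)
    (ha : ∑ i ∈ s, a i ^ 2 ≤ Ψ ^ 2) {n : ℕ} (hn : Even n) {t : ℝ} (ht : 0 < t) :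
    μ {ω | t * Ψ ≤ |∑ i ∈ s, a i * X i ω|} ≤ ENNReal.ofReal (momentBound C n / t ^ n) := by
  have hnorm : ∑ i ∈ s, (a i / Ψ) ^ 2 ≤ 1 := by
    simpa only [div_pow, ← sum_div] using div_le_one_of_le₀ ha (sq_nonneg Ψ)
  have hset : {ω | t * Ψ ≤ |∑ i ∈ s, a i * X i ω|} = {ω | t ≤ |∑ i ∈ s, a i / Ψ * X i ω|} := by
    ext ω
    simp only [Set.mem_ofPred_eq, div_mul_eq_mul_div, ← sum_div, abs_div, abs_of_pos hΨ,
      le_div_iff₀ hΨ]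
  rw [hset]
  refine measure_abs_ge_le_of_integral_pow_le hn
    (memLp_finsetSum s fun i _ => (hLp i n).const_mul (a i / Ψ)).integrable_pow ?_ ht
  exact (le_abs_self _).trans (abs_integral_sum_pow_le hind hLp hmean hC _ n hnorm)

theorem measure_norm_sum_gt_mul_sqrt_le {ι : Type*} [Fintype ι] {X : ι → Ω → ℝ}
    (hind : iIndepFun X μ) (hLp : ∀ i (p : ℕ), MemLp (X i) p μ)
    (hmean : ∀ i, ∫ ω, X i ω ∂μ = 0) {C : ℕ → ℝ} (hC : ∀ i m, |∫ ω, X i ω ^ m ∂μ| ≤ C m)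
    (b : ι → ℂ) {n : ℕ} (hn : Even n) {t : ℝ} (ht : 0 < t) :
    μ {ω | t * √(∑ i, ‖b i‖ ^ 2) < ‖∑ i, b i * X i ω‖} ≤
      ENNReal.ofReal (2 * (2 ^ n * momentBound C n / t ^ n)) := by
  set Ψ := √(∑ i, ‖b i‖ ^ 2)
  rcases (Real.sqrt_nonneg _).eq_or_lt with hΨ | hΨ
  · have hsum : ∑ i, ‖b i‖ ^ 2 = 0 :=
      le_antisymm (Real.sqrt_eq_zero'.1 hΨ.symm) (sum_nonneg fun i _ => sq_nonneg _)
    have hb : b = 0 := funext fun i => by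
      simpa using (sum_eq_zero_iff_of_nonneg fun i _ => sq_nonneg ‖b i‖).1 hsum i (mem_univ i)
    simp [hb, show Ψ = 0 from hΨ.symm]
  have hpart (f : ℂ → ℝ) (hf : ∀ z, |f z| ≤ ‖z‖) :
      μ {ω | t / 2 * Ψ ≤ |∑ i, f (b i) * X i ω|} ≤
        ENNReal.ofReal (2 ^ n * momentBound C n / t ^ n) := by
    refine (measure_abs_sum_ge_mul_le hind hLp hmean hC hΨ ?_ hn (half_pos ht)).trans_eq ?_
    · rw [Real.sq_sqrt (by positivity)]
      exact sum_le_sum fun i _ => sq_le_sq.2 (by simpa using hf (b i))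
    · rw [div_pow, div_div_eq_mul_div, mul_comm]
  have hsub : {ω | t * Ψ < ‖∑ i, b i * X i ω‖} ⊆
      {ω | t / 2 * Ψ ≤ |∑ i, (b i).re * X i ω|} ∪ {ω | t / 2 * Ψ ≤ |∑ i, (b i).im * X i ω|} := by
    intro ω (hω : t * Ψ < ‖∑ i, b i * X i ω‖)
    by_contra h
    simp only [Set.mem_union, Set.mem_ofPred_eq, not_or, not_le] at h
    have := Complex.norm_le_abs_re_add_abs_im (∑ i, b i * X i ω)
    simp only [Complex.re_sum, Complex.im_sum, Complex.re_mul_ofReal, Complex.im_mul_ofReal] at this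
    linarith
  have h0 : 0 ≤ 2 ^ n * momentBound C n / t ^ n := by
    have := one_le_momentBound C n
    positivity
  calc _ ≤ _ := (measure_mono hsub).trans (measure_union_le _ _)
    _ ≤ _ := add_le_add (hpart _ Complex.abs_re_le_norm) (hpart _ Complex.abs_im_le_norm)
    _ = _ := by rw [two_mul, ENNReal.ofReal_add h0 h0]

end Moments

lemma div_rpow_pow_le_rpow_neg {N A ε D : ℝ} {n : ℕ} (hN : 1 ≤ N) (hA : A ≤ N)
    (hn : D + 1 ≤ ε * n) : A / (N ^ ε) ^ n ≤ N ^ (-D) := by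
  have hN0 : 0 < N := zero_lt_one.trans_le hN
  rw [← Real.rpow_natCast, ← Real.rpow_mul hN0.le, div_le_iff₀ (by positivity),
    ← Real.rpow_add hN0]
  calc A ≤ N ^ (1 : ℝ) := (Real.rpow_one N).symm ▸ hA
    _ ≤ N ^ (-D + ε * n) := Real.rpow_le_rpow_of_exponent_le hN (by linarith)

theorem stmt5_general (C : ℕ → ℝ) (ε D : ℝ) (hε : 0 < ε) :
    ∃ N₀ : ℕ, ∀ N ≥ N₀, ∀ (Ω : Type) [MeasurableSpace Ω] (μ : Measure Ω),
      IsProbabilityMeasure μ →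
      ∀ (X : Fin N → Ω → ℝ) (b : Fin N → ℂ),
      (∀ i, Measurable (X i)) →
      ProbabilityTheory.iIndepFun X μ →
      (∀ i, (∫ ω, X i ω ∂μ) = 0) →
      (∀ i, (∫ ω, (X i ω) ^ 2 ∂μ) = 1) →
      (∀ i p, Integrable (fun ω => |X i ω| ^ p) μ) →
      (∀ i p, (∫ ω, |X i ω| ^ p ∂μ) ≤ C p) →
      μ {ω | (N : ℝ) ^ ε * Real.sqrt (∑ i, ‖b i‖ ^ 2) <
          ‖∑ i, b i * (X i ω)‖} ≤ ENNReal.ofReal ((N : ℝ) ^ (-D)) := by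
  set n := 2 * ⌈(D + 1) / ε⌉₊
  have hn : D + 1 ≤ ε * n := by
    have := Nat.le_ceil ((D + 1) / ε)
    rw [div_le_iff₀' hε] at this
    push_cast [n]
    nlinarith
  refine ⟨max 1 ⌈2 * 2 ^ n * momentBound C n⌉₊,
    fun N hN Ω _ μ _ X b hX hind hmean _ hmom hC => ?_⟩
  have hN1 : (1 : ℝ) ≤ N := by exact_mod_cast (le_max_left _ _).trans hN
  have hA : 2 * 2 ^ n * momentBound C n ≤ N :=
    (Nat.le_ceil _).trans (by exact_mod_cast (le_max_right _ _).trans hN)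
  have hLp (i) (p : ℕ) : MemLp (X i) p μ :=
    memLp_of_integrable_abs_pow (hX i).aestronglyMeasurable (hmom i p)
  have hC' (i) (m : ℕ) : |∫ ω, X i ω ^ m ∂μ| ≤ C m :=
    abs_integral_le_integral_abs.trans (by simpa only [abs_pow] using hC i m)
  refine (measure_norm_sum_gt_mul_sqrt_le hind hLp hmean hC' b (even_two_mul _ : Even n)
    (by positivity)).trans (ENNReal.ofReal_le_ofReal ?_)
  rw [← mul_div_assoc, ← mul_assoc]
  exact div_rpow_pow_le_rpow_neg hN1 hA hn

/-- Large deviation bound for linear forms in independent centered random variables. -/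
theorem stmt5 (C : ℕ → ℝ) (ε D : ℝ) (hε : 0 < ε) (hD : 0 < D) :
    ∃ N₀ : ℕ, ∀ N ≥ N₀, ∀ (Ω : Type) [MeasurableSpace Ω] (μ : Measure Ω),
      IsProbabilityMeasure μ →
      ∀ (X : Fin N → Ω → ℝ) (b : Fin N → ℂ),
      (∀ i, Measurable (X i)) →
      ProbabilityTheory.iIndepFun X μ →
      (∀ i, (∫ ω, X i ω ∂μ) = 0) →
      (∀ i, (∫ ω, (X i ω) ^ 2 ∂μ) = 1) →
      (∀ i p, Integrable (fun ω => |X i ω| ^ p) μ) →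
      (∀ i p, (∫ ω, |X i ω| ^ p ∂μ) ≤ C p) →
      μ {ω | (N : ℝ) ^ ε * Real.sqrt (∑ i, ‖b i‖ ^ 2) <
          ‖∑ i, b i * (X i ω)‖} ≤ ENNReal.ofReal ((N : ℝ) ^ (-D)) :=
  stmt5_general C ε D hε
end

section
/- Let Φ₁ = (1/N) Σ_a [γ³ d_a² \tilde{b}/(γ d_a² − ξ)³ + 2γ³ d_a² b E₊/(γ d_a² − ξ)³ + γ² b³ E₊²/(γ d_a² − ξ)³]. Assume ξ = b\tilde{b}, φ₂ = 1/(γ b² h) with h = E₊ b + \tilde{b}, φ₁ = (b−1)/(γ b), and the second-order relation (1/γ²)(1/N) Σ_a b²/(γ d_a² − ξ)² = −1/(γ b³) − (1/N) Σ_a (2E₊ b − γ(1−c))²/(γ d_a² − ξ)³ − (1/N) Σ_a E₊/(γ d_a² − ξ)². Then Φ₁ = −b³ φ₂. -/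
/-- `Φ₁ = −b³ φ₂` from `ξ = b b̃`, `φ₂ = 1/(γ b² h)`, `φ₁ = (b−1)/(γb)` and
the second-order relation (R2). -/
theorem stmt17 (M N : ℕ) (hN : 0 < N) (d : Fin M → ℝ)
    (γ b tb ξ E h c : ℝ) (hγ : γ ≠ 0) (hb : b ≠ 0) (hh : h ≠ 0)
    (hden : ∀ a, γ * d a ^ 2 - ξ ≠ 0)
    (hξ : ξ = b * tb) (hhdef : h = E * b + tb) (htb : tb = E * b - γ * (1 - c))
    (hφ₁ : (N : ℝ)⁻¹ * ∑ a, (γ * d a ^ 2 - ξ)⁻¹ = (b - 1) / (γ * b))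
    (hφ₂ : (N : ℝ)⁻¹ * ∑ a, ((γ * d a ^ 2 - ξ) ^ 2)⁻¹ = 1 / (γ * b ^ 2 * h))
    (hR2 : 1 / γ ^ 2 * ((N : ℝ)⁻¹ * ∑ a, b ^ 2 / (γ * d a ^ 2 - ξ) ^ 2) =
      -(1 / (γ * b ^ 3)) -
        (N : ℝ)⁻¹ * ∑ a, (2 * E * b - γ * (1 - c)) ^ 2 / (γ * d a ^ 2 - ξ) ^ 3 -
        (N : ℝ)⁻¹ * ∑ a, E / (γ * d a ^ 2 - ξ) ^ 2) :
    (N : ℝ)⁻¹ * ∑ a, (γ ^ 3 * d a ^ 2 * tb / (γ * d a ^ 2 - ξ) ^ 3 +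
        2 * γ ^ 3 * d a ^ 2 * b * E / (γ * d a ^ 2 - ξ) ^ 3 +
        γ ^ 2 * b ^ 3 * E ^ 2 / (γ * d a ^ 2 - ξ) ^ 3) =
      -(b ^ 3) * ((N : ℝ)⁻¹ * ∑ a, ((γ * d a ^ 2 - ξ) ^ 2)⁻¹) := by
  have key : ∀ a : Fin M, γ ^ 3 * d a ^ 2 * tb / (γ * d a ^ 2 - ξ) ^ 3 +
        2 * γ ^ 3 * d a ^ 2 * b * E / (γ * d a ^ 2 - ξ) ^ 3 +
        γ ^ 2 * b ^ 3 * E ^ 2 / (γ * d a ^ 2 - ξ) ^ 3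
      = γ ^ 2 * (tb + 2 * b * E) * ((γ * d a ^ 2 - ξ) ^ 2)⁻¹ +
        γ ^ 2 * b * ((2 * E * b - γ * (1 - c)) ^ 2 / (γ * d a ^ 2 - ξ) ^ 3) := by
    intro a
    have hsa := hden a
    subst hξ htb
    field_simp
    ring
  have hsum : (N : ℝ)⁻¹ * ∑ a, (γ ^ 3 * d a ^ 2 * tb / (γ * d a ^ 2 - ξ) ^ 3 +
        2 * γ ^ 3 * d a ^ 2 * b * E / (γ * d a ^ 2 - ξ) ^ 3 +
        γ ^ 2 * b ^ 3 * E ^ 2 / (γ * d a ^ 2 - ξ) ^ 3)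
      = γ ^ 2 * (tb + 2 * b * E) * ((N : ℝ)⁻¹ * ∑ a, ((γ * d a ^ 2 - ξ) ^ 2)⁻¹) +
        γ ^ 2 * b * ((N : ℝ)⁻¹ *
          ∑ a, (2 * E * b - γ * (1 - c)) ^ 2 / (γ * d a ^ 2 - ξ) ^ 3) := by
    rw [Finset.sum_congr rfl fun a _ => key a, Finset.sum_add_distrib,
      ← Finset.mul_sum, ← Finset.mul_sum]
    ring
  have hE : (N : ℝ)⁻¹ * ∑ a, E / (γ * d a ^ 2 - ξ) ^ 2
      = E * ((N : ℝ)⁻¹ * ∑ a, ((γ * d a ^ 2 - ξ) ^ 2)⁻¹) := by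
    simp only [div_eq_mul_inv, ← Finset.mul_sum]
    ring
  have hb2 : (N : ℝ)⁻¹ * ∑ a, b ^ 2 / (γ * d a ^ 2 - ξ) ^ 2
      = b ^ 2 * ((N : ℝ)⁻¹ * ∑ a, ((γ * d a ^ 2 - ξ) ^ 2)⁻¹) := by
    simp only [div_eq_mul_inv, ← Finset.mul_sum]
    ring
  rw [hsum, hφ₂]
  rw [hb2, hE, hφ₂] at hR2
  -- solve for B from hR2 and substitute
  have hB : (N : ℝ)⁻¹ * ∑ a, (2 * E * b - γ * (1 - c)) ^ 2 / (γ * d a ^ 2 - ξ) ^ 3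
      = -(1 / (γ * b ^ 3)) - E * (1 / (γ * b ^ 2 * h))
        - 1 / γ ^ 2 * (b ^ 2 * (1 / (γ * b ^ 2 * h))) := by
    linarith [hR2]
  rw [hB]
  have htb' : tb = h - E * b := by linarith
  rw [htb']
  field_simp
  ring
end

section
/- With the same assumptions, let Φ₂ = (1/N) Σ_a [γ³ d_a² b E₊²/(γ d_a² − ξ)³ + 2γ³ d_a² \tilde{b} E₊/(γ d_a² − ξ)³ + γ² \tilde{b}³/(γ d_a² − ξ)³] − γ²(1−c)/b³. Then Φ₂ = −\tilde{b} b² φ₂, and consequently E₊ Φ₁ + Φ₂ = −(E₊ b + \tilde{b}) b² φ₂ = −1/γ, where Φ₁ = −b³φ₂ as above. -/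
/-- `Φ₂ = −b̃ b² φ₂`, and consequently
`E₊ Φ₁ + Φ₂ = −(E₊ b + b̃) b² φ₂ = −1/γ`, where `Φ₁ = −b³ φ₂`. -/
theorem stmt18 (M N : ℕ) (hN : 0 < N) (d : Fin M → ℝ)
    (γ b tb ξ E h c : ℝ) (hγ : γ ≠ 0) (hb : b ≠ 0) (hh : h ≠ 0)
    (hden : ∀ a, γ * d a ^ 2 - ξ ≠ 0)
    (hξ : ξ = b * tb) (hhdef : h = E * b + tb) (htb : tb = E * b - γ * (1 - c))
    (hφ₁ : (N : ℝ)⁻¹ * ∑ a, (γ * d a ^ 2 - ξ)⁻¹ = (b - 1) / (γ * b))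
    (hφ₂ : (N : ℝ)⁻¹ * ∑ a, ((γ * d a ^ 2 - ξ) ^ 2)⁻¹ = 1 / (γ * b ^ 2 * h))
    (hR2 : 1 / γ ^ 2 * ((N : ℝ)⁻¹ * ∑ a, b ^ 2 / (γ * d a ^ 2 - ξ) ^ 2) =
      -(1 / (γ * b ^ 3)) -
        (N : ℝ)⁻¹ * ∑ a, (2 * E * b - γ * (1 - c)) ^ 2 / (γ * d a ^ 2 - ξ) ^ 3 -
        (N : ℝ)⁻¹ * ∑ a, E / (γ * d a ^ 2 - ξ) ^ 2)
    (Φ₁ Φ₂ φ₂ : ℝ)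
    (hΦ₁ : Φ₁ = -(b ^ 3) * φ₂)
    (hΦ₂ : Φ₂ = (N : ℝ)⁻¹ * ∑ a, (γ ^ 3 * d a ^ 2 * b * E ^ 2 / (γ * d a ^ 2 - ξ) ^ 3 +
        2 * γ ^ 3 * d a ^ 2 * tb * E / (γ * d a ^ 2 - ξ) ^ 3 +
        γ ^ 2 * tb ^ 3 / (γ * d a ^ 2 - ξ) ^ 3) - γ ^ 2 * (1 - c) / b ^ 3)
    (hφ₂def : φ₂ = (N : ℝ)⁻¹ * ∑ a, ((γ * d a ^ 2 - ξ) ^ 2)⁻¹) :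
    Φ₂ = -tb * b ^ 2 * φ₂ ∧
      E * Φ₁ + Φ₂ = -(E * b + tb) * b ^ 2 * φ₂ ∧
      E * Φ₁ + Φ₂ = -(1 / γ) := by
  have hφ₂val : φ₂ = 1 / (γ * b ^ 2 * h) := by rw [hφ₂def, hφ₂]
  set S3 : ℝ := (N : ℝ)⁻¹ * ∑ a, ((γ * d a ^ 2 - ξ) ^ 3)⁻¹ with hS3def
  -- rewrite the three sums in hR2
  have e1 : (N : ℝ)⁻¹ * ∑ a, b ^ 2 / (γ * d a ^ 2 - ξ) ^ 2
      = b ^ 2 * ((N : ℝ)⁻¹ * ∑ a, ((γ * d a ^ 2 - ξ) ^ 2)⁻¹) := by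
    simp only [div_eq_mul_inv, ← Finset.mul_sum]; ring
  have e2 : (N : ℝ)⁻¹ * ∑ a, (2 * E * b - γ * (1 - c)) ^ 2 / (γ * d a ^ 2 - ξ) ^ 3
      = h ^ 2 * S3 := by
    have : (2 * E * b - γ * (1 - c)) = h := by rw [hhdef, htb]; ring
    rw [this, hS3def]
    simp only [div_eq_mul_inv, ← Finset.mul_sum]; ring
  have e3 : (N : ℝ)⁻¹ * ∑ a, E / (γ * d a ^ 2 - ξ) ^ 2
      = E * ((N : ℝ)⁻¹ * ∑ a, ((γ * d a ^ 2 - ξ) ^ 2)⁻¹) := by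
    simp only [div_eq_mul_inv, ← Finset.mul_sum]; ring
  rw [e1, e2, e3, ← hφ₂def] at hR2
  have hS3 : h ^ 2 * S3 = -(1 / (γ * b ^ 3)) - E * φ₂ - b ^ 2 * φ₂ / γ ^ 2 := by
    linear_combination hR2
  -- simplify the defining sum of Φ₂
  have hterm : ∀ a : Fin M,
      γ ^ 3 * d a ^ 2 * b * E ^ 2 / (γ * d a ^ 2 - ξ) ^ 3 +
        2 * γ ^ 3 * d a ^ 2 * tb * E / (γ * d a ^ 2 - ξ) ^ 3 +
        γ ^ 2 * tb ^ 3 / (γ * d a ^ 2 - ξ) ^ 3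
      = γ ^ 2 * E * (h + tb) * ((γ * d a ^ 2 - ξ) ^ 2)⁻¹ +
        γ ^ 2 * tb * h ^ 2 * ((γ * d a ^ 2 - ξ) ^ 3)⁻¹ := by
    intro a
    have hD := hden a
    field_simp
    rw [hξ, hhdef]; ring
  have hΦ₂' : Φ₂ = γ ^ 2 * E * (h + tb) * φ₂ + γ ^ 2 * tb * (h ^ 2 * S3)
      - γ ^ 2 * (1 - c) / b ^ 3 := by
    rw [hΦ₂, hφ₂def, hS3def]
    rw [Finset.sum_congr rfl fun a _ => hterm a, Finset.sum_add_distrib,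
      ← Finset.mul_sum, ← Finset.mul_sum]
    ring
  have h1 : Φ₂ = -tb * b ^ 2 * φ₂ := by
    rw [hΦ₂', hS3, hφ₂val, htb]
    field_simp
    ring
  refine ⟨h1, ?_, ?_⟩
  · rw [h1, hΦ₁]; ring
  · have h2 : E * Φ₁ + Φ₂ = -h * b ^ 2 * φ₂ := by rw [h1, hΦ₁, hhdef]; ring
    rw [h2, hφ₂val]
    field_simp
end
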